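/- Let (∇̄, g, φ, ν) be an indefinite Sasakian statistical structure, so that ∇̄_X φY - φ ∇̄*_X Y = g(X,Y)ν - η(Y)X and ∇̄_X ν = -φX + g(∇̄_X ν, ν)ν. Let D̃_X Y = ∇̄_X Y - K(X,Y) - η(X)φY be the associated quarter-symmetric metric connection. Then (D̃_X φ)(Y) = g(X,Y)ν - η(Y)X and D̃_X ν = -φX + η(D̃_X ν)ν for all X, Y. -/
import Mathlib


/-- For an indefinite Sasakian statistical structure (∇̄, g, φ, ν) with dual
∇̄* = ∇̄ - 2K, the associated quarter-symmetric metric connection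
D̃_X Y = ∇̄_X Y - K(X,Y) - η(X)φY satisfies
(D̃_X φ)(Y) = g(X,Y)ν - η(Y)X and D̃_X ν = -φX + η(D̃_X ν)ν. -/
theorem stmt_11 (V : Type*) [AddCommGroup V] [Module ℝ V]
    (g : V →ₗ[ℝ] V →ₗ[ℝ] ℝ) (φ : V →ₗ[ℝ] V) (ν : V) (η : V → ℝ)
    (bconn bconns : V → V → V) (K : V → V → V) (Dt : V → V → V)
    (hη : ∀ X, η X = g X ν)
    (hφ2 : ∀ X, φ (φ X) = -X + η X • ν)
    (hφν : φ ν = 0)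
    (hην : η ν = 1)
    -- difference tensor properties of a Sasakian statistical structure
    (hK0 : ∀ X, K X 0 = 0)
    (hanti : ∀ X Y, K X (φ Y) + φ (K X Y) = 0)
    (hconns : ∀ X Y, bconns X Y = bconn X Y - (2 : ℝ) • K X Y)
    -- Sasakian statistical conditions
    (hsas1 : ∀ X Y, bconn X (φ Y) - φ (bconns X Y) = g X Y • ν - η Y • X)
    (hsas2 : ∀ X, bconn X ν = -(φ X) + g (bconn X ν) ν • ν)
    -- the quarter-symmetric metric connection
    (hD : ∀ X Y, Dt X Y = bconn X Y - K X Y - η X • φ Y) :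
    (∀ X Y, Dt X (φ Y) - φ (Dt X Y) = g X Y • ν - η Y • X) ∧
    (∀ X, Dt X ν = -(φ X) + η (Dt X ν) • ν) := by
  -- η ∘ φ = 0
  have hηφ : ∀ X, η (φ X) = 0 := by
    intro X
    have h1 : φ (φ (φ X)) = -(φ X) + η (φ X) • ν := hφ2 (φ X)
    have h2 : φ (φ (φ X)) = -(φ X) := by
      rw [hφ2 X, map_add, map_neg, map_smul, hφν, smul_zero, add_zero]
    have h3 : η (φ X) • ν = 0 := by
      have := h1.symm.trans h2
      have h4 := congrArg (fun z => z + φ X) this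
      simpa using h4
    have h5 := congrArg (fun z => g z ν) h3
    simp only [map_smul, LinearMap.smul_apply, map_zero, LinearMap.zero_apply,
      smul_eq_mul] at h5
    rw [← hη ν, hην, mul_one] at h5
    exact h5
  constructor
  · intro X Y
    have h1 := hsas1 X Y
    rw [hconns, map_sub, map_smul] at h1
    have h2' : K X (φ Y) = -φ (K X Y) := eq_neg_of_add_eq_zero_left (hanti X Y)
    rw [hD, hD, h2', map_sub, map_sub, map_smul, ← h1]
    module
  · intro X
    have hKν : K X ν = η (K X ν) • ν := by
      have h := hanti X ν
      rw [hφν, hK0, zero_add] at h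
      have h2 : φ (φ (K X ν)) = -(K X ν) + η (K X ν) • ν := hφ2 (K X ν)
      rw [h, map_zero, eq_comm, neg_add_eq_zero] at h2
      exact h2
    obtain ⟨t, ht⟩ : ∃ t : ℝ, K X ν = t • ν := ⟨η (K X ν), hKν⟩
    obtain ⟨a, ha⟩ : ∃ a : ℝ, bconn X ν = -(φ X) + a • ν := ⟨_, hsas2 X⟩
    have hgφ : g (φ X) ν = 0 := by rw [← hη]; exact hηφ X
    have hgν : g ν ν = 1 := by rw [← hη]; exact hην
    have hD' : Dt X ν = -(φ X) + (a - t) • ν := by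
      rw [hD, hφν, smul_zero, sub_zero, ht, ha, sub_smul]
      abel
    have hηD : η (Dt X ν) = a - t := by
      rw [hη, hD']
      simp [hgφ, hgν]
    rw [hηD]
    exact hD'
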